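/- arXiv:1907.00017 — 2 statements merged into one kernel-verified Lean document; each statement's English description precedes it below -/
import Mathlib

section
/- Let V_B be a real Hilbert space, T > 0, λ > 0, u₀ ∈ V_B, and let B : V_B → V_B^* be a linear bounded operator with ‖Bv‖_{V_B^*} ≤ β_B ‖v‖_{V_B} for all v ∈ V_B. Then the composed operator BK, defined by (BKv)(t) = B((Kv)(t)), maps L²(0,T;V_B) into L²(0,T;V_B^*), is affine-linear and bounded, and satisfies ‖BKv − Bu₀‖_{L²(0,T;V_B^*)} ≤ β_B (1 − e^{−λT}) ‖v‖_{L²(0,T;V_B)} for all v ∈ L²(0,T;V_B). -/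
/-!
With the causal kernel `k(t, s) = λ e^{-λ(t-s)} 1_{s ≤ t}` we have `Kv = u₀ + ∫₀ᵀ k(·, s) v(s) ds`.
Both the row integrals `∫₀ᵀ k(t, s) ds = 1 - e^{-λt}` and the column integrals
`∫₀ᵀ k(t, s) dt = 1 - e^{-λ(T-s)}` are at most `1 - e^{-λT}`, so the Schur test
(Cauchy–Schwarz against the weight `k(t, ·)`, then Tonelli) bounds `v ↦ Kv - u₀` on `L²(0,T)` by
`1 - e^{-λT}`; composing with `B` multiplies the bound by `β_B`. Affine linearity is linearity of
the Bochner integral.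
-/

open MeasureTheory Real Set NormedSpace
open scoped ENNReal

/-- The Volterra operator `(Kv)(t) = u₀ + ∫₀ᵗ λ e^{−λ(t−s)} v(s) ds`. -/
noncomputable def volterraK {X : Type*} [NormedAddCommGroup X] [NormedSpace ℝ X]
    (lam : ℝ) (u₀ : X) (v : ℝ → X) (t : ℝ) : X :=
  u₀ + ∫ s in Set.Ioc (0 : ℝ) t, (lam * Real.exp (-lam * (t - s))) • v s

namespace ENNReal

variable {α : Type*} [MeasurableSpace α]

theorem sq_lintegral_mul_le_lintegral_mul_lintegral_mul_sq {μ : Measure α} {w f : α → ℝ≥0∞}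
    (hw : AEMeasurable w μ) (hf : AEMeasurable f μ) :
    (∫⁻ a, w a * f a ∂μ) ^ 2 ≤ (∫⁻ a, w a ∂μ) * ∫⁻ a, w a * f a ^ 2 ∂μ := by
  have hsqrt : ∀ x : ℝ≥0∞, x ^ (1 / 2 : ℝ) * x ^ (1 / 2 : ℝ) = x := fun x => by
    rw [← ENNReal.rpow_add_of_nonneg _ _ (by norm_num) (by norm_num)]; norm_num
  have hsq : ∀ x : ℝ≥0∞, (x ^ (1 / 2 : ℝ)) ^ (2 : ℝ) = x := fun x => by
    rw [← ENNReal.rpow_mul]; norm_num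
  -- Hölder with exponents `2, 2` for `√w` and `√w f`
  have holder := ENNReal.lintegral_mul_le_Lp_mul_Lq μ Real.HolderConjugate.two_two
    (hw.pow_const (1 / 2 : ℝ)) ((hw.pow_const (1 / 2 : ℝ)).mul hf)
  simp only [Pi.mul_apply, ← mul_assoc, hsqrt, ENNReal.mul_rpow_of_nonneg _ _ zero_le_two,
    hsq, ENNReal.rpow_two] at holder
  calc (∫⁻ a, w a * f a ∂μ) ^ 2
      ≤ ((∫⁻ a, w a ∂μ) ^ (1 / 2 : ℝ) * (∫⁻ a, w a * f a ^ 2 ∂μ) ^ (1 / 2 : ℝ)) ^ 2 :=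
        pow_le_pow_left' holder 2
    _ = (∫⁻ a, w a ∂μ) * ∫⁻ a, w a * f a ^ 2 ∂μ := by
        rw [mul_pow, ← ENNReal.rpow_two, ← ENNReal.rpow_two, hsq, hsq]

end ENNReal

namespace MeasureTheory

variable {α β : Type*} [MeasurableSpace α] [MeasurableSpace β]

theorem lintegral_sq_lintegral_kernel_mul_le {μ : Measure α} {ν : Measure β}
    [SFinite μ] [SFinite ν] {K : α → β → ℝ≥0∞} (hK : Measurable (Function.uncurry K))
    {f : β → ℝ≥0∞} (hf : Measurable f) {M : ℝ≥0∞}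
    (hrow : ∀ᵐ t ∂μ, ∫⁻ s, K t s ∂ν ≤ M) (hcol : ∀ᵐ s ∂ν, ∫⁻ t, K t s ∂μ ≤ M) :
    ∫⁻ t, (∫⁻ s, K t s * f s ∂ν) ^ 2 ∂μ ≤ M ^ 2 * ∫⁻ s, f s ^ 2 ∂ν := by
  have hKf : Measurable (Function.uncurry fun t s => K t s * f s ^ 2) :=
    hK.mul ((hf.pow_const 2).comp measurable_snd)
  calc ∫⁻ t, (∫⁻ s, K t s * f s ∂ν) ^ 2 ∂μ
      ≤ ∫⁻ t, M * ∫⁻ s, K t s * f s ^ 2 ∂ν ∂μ := by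
        refine lintegral_mono_ae ?_
        filter_upwards [hrow] with t ht
        exact (ENNReal.sq_lintegral_mul_le_lintegral_mul_lintegral_mul_sq
          hK.of_uncurry_left.aemeasurable hf.aemeasurable).trans (mul_le_mul_left ht _)
    _ = M * ∫⁻ s, (∫⁻ t, K t s ∂μ) * f s ^ 2 ∂ν := by
        rw [lintegral_const_mul _ hKf.lintegral_prod_right,
          lintegral_lintegral_swap hKf.aemeasurable]
        simp_rw [lintegral_mul_const _ hK.of_uncurry_right]
    _ ≤ M * ∫⁻ s, M * f s ^ 2 ∂ν := by
        gcongr 1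
        refine lintegral_mono_ae ?_
        filter_upwards [hcol] with s hs
        exact mul_le_mul_left hs _
    _ = M ^ 2 * ∫⁻ s, f s ^ 2 ∂ν := by
        rw [lintegral_const_mul _ (hf.pow_const 2), sq, mul_assoc]

theorem eLpNorm_two_sq_eq_lintegral (μ : Measure α) (g : α → ℝ≥0∞) :
    eLpNorm g 2 μ ^ 2 = ∫⁻ x, g x ^ 2 ∂μ := by
  simpa [ENNReal.rpow_two] using eLpNorm_nnreal_pow_eq_lintegral (μ := μ) (f := g) two_ne_zero

theorem eLpNorm_two_lintegral_kernel_mul_le {μ : Measure α} {ν : Measure β}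
    [SFinite μ] [SFinite ν] {K : α → β → ℝ≥0∞} (hK : Measurable (Function.uncurry K))
    {f : β → ℝ≥0∞} (hf : Measurable f) {M : ℝ≥0∞}
    (hrow : ∀ᵐ t ∂μ, ∫⁻ s, K t s ∂ν ≤ M) (hcol : ∀ᵐ s ∂ν, ∫⁻ t, K t s ∂μ ≤ M) :
    eLpNorm (fun t => ∫⁻ s, K t s * f s ∂ν) 2 μ ≤ M * eLpNorm f 2 ν := by
  rw [← ENNReal.pow_le_pow_left_iff two_ne_zero, mul_pow, eLpNorm_two_sq_eq_lintegral,
    eLpNorm_two_sq_eq_lintegral]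
  exact lintegral_sq_lintegral_kernel_mul_le hK hf hrow hcol

end MeasureTheory

theorem integral_mul_exp_neg_mul (lam a b : ℝ) :
    ∫ r in a..b, lam * Real.exp (-lam * r) = Real.exp (-lam * a) - Real.exp (-lam * b) := by
  have hderiv : ∀ r ∈ uIcc a b,
      HasDerivAt (fun r => -Real.exp (-lam * r)) (lam * Real.exp (-lam * r)) r := fun r _ => by
    simpa [mul_comm] using (((hasDerivAt_id r).const_mul (-lam)).exp).fun_neg
  rw [intervalIntegral.integral_eq_sub_of_hasDerivAt hderiv
    (Continuous.intervalIntegrable (by fun_prop) _ _)]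
  ring

theorem lintegral_Ioc_ofReal_eq_ofReal_intervalIntegral {f : ℝ → ℝ} {a b : ℝ} (hab : a ≤ b)
    (hf : IntegrableOn f (Ioc a b)) (hf_nonneg : ∀ x, 0 ≤ f x) :
    ∫⁻ x in Ioc a b, ENNReal.ofReal (f x) = ENNReal.ofReal (∫ x in a..b, f x) := by
  rw [intervalIntegral.integral_of_le hab,
    ofReal_integral_eq_lintegral_ofReal hf (Filter.Eventually.of_forall hf_nonneg)]

section Volterra

variable {X : Type*} [NormedAddCommGroup X] [NormedSpace ℝ X] {lam T : ℝ}

noncomputable def volterraKernel (lam t s : ℝ) : ℝ≥0∞ :=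
  if s ≤ t then ENNReal.ofReal (lam * Real.exp (-lam * (t - s))) else 0

theorem measurable_uncurry_volterraKernel (lam : ℝ) :
    Measurable (Function.uncurry (volterraKernel lam)) :=
  Measurable.ite (measurableSet_le measurable_snd measurable_fst) (by fun_prop) measurable_const

theorem setLIntegral_volterraKernel_mul {t : ℝ} (ht : t ≤ T) (φ : ℝ → ℝ≥0∞) :
    ∫⁻ s in Ioc 0 T, volterraKernel lam t s * φ s =
      ∫⁻ s in Ioc 0 t, ENNReal.ofReal (lam * Real.exp (-lam * (t - s))) * φ s := by
  have hind : (fun s => volterraKernel lam t s * φ s) =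
      (Iic t).indicator fun s => ENNReal.ofReal (lam * Real.exp (-lam * (t - s))) * φ s := by
    ext s
    by_cases hs : s ≤ t <;> simp [volterraKernel, hs]
  rw [hind, lintegral_indicator measurableSet_Iic, Measure.restrict_restrict measurableSet_Iic,
    Iic_inter_Ioc_of_le ht]

theorem setLIntegral_volterraKernel_row_le (hlam : 0 ≤ lam) {t : ℝ} (ht : t ∈ Icc 0 T) :
    ∫⁻ s in Ioc 0 T, volterraKernel lam t s ≤ ENNReal.ofReal (1 - Real.exp (-lam * T)) := by
  have h := setLIntegral_volterraKernel_mul (lam := lam) ht.2 1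
  simp only [Pi.one_apply, mul_one] at h
  rw [h, lintegral_Ioc_ofReal_eq_ofReal_intervalIntegral ht.1
    (Continuous.integrableOn_Ioc (by fun_prop)) (fun s => by positivity),
    intervalIntegral.integral_comp_sub_left (fun r => lam * Real.exp (-lam * r)),
    integral_mul_exp_neg_mul]
  refine ENNReal.ofReal_le_ofReal ?_
  simp only [sub_self, mul_zero, Real.exp_zero, sub_zero]
  gcongr 1 - Real.exp ?_
  nlinarith [ht.2]

theorem setLIntegral_volterraKernel_col_le (hlam : 0 ≤ lam) {s : ℝ} (hs : s ∈ Ioc 0 T) :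
    ∫⁻ t in Ioc 0 T, volterraKernel lam t s ≤ ENNReal.ofReal (1 - Real.exp (-lam * T)) := by
  have hind : (fun t => volterraKernel lam t s) =
      (Ici s).indicator fun t => ENNReal.ofReal (lam * Real.exp (-lam * (t - s))) := by
    ext t
    by_cases hst : s ≤ t <;> simp [volterraKernel, hst]
  rw [hind, lintegral_indicator measurableSet_Ici, Measure.restrict_restrict measurableSet_Ici]
  refine (lintegral_mono_set (t := Icc s T) fun t ht => ⟨ht.1, ht.2.2⟩).trans ?_
  rw [← restrict_Ioc_eq_restrict_Icc,
    lintegral_Ioc_ofReal_eq_ofReal_intervalIntegral hs.2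
      (Continuous.integrableOn_Ioc (by fun_prop)) (fun t => by positivity),
    intervalIntegral.integral_comp_sub_right (fun r => lam * Real.exp (-lam * r)),
    integral_mul_exp_neg_mul]
  refine ENNReal.ofReal_le_ofReal ?_
  simp only [sub_self, mul_zero, Real.exp_zero]
  gcongr 1 - Real.exp ?_
  nlinarith [hs.1]

noncomputable def volterraConv (lam : ℝ) (v : ℝ → X) (t : ℝ) : X :=
  ∫ s in Ioc 0 t, (lam * Real.exp (-lam * (t - s))) • v s

theorem volterraK_eq_add (u₀ : X) (v : ℝ → X) (t : ℝ) :
    volterraK lam u₀ v t = u₀ + volterraConv lam v t := rfl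

theorem volterraConv_congr_ae {v w : ℝ → X} (hvw : v =ᵐ[volume.restrict (Ioc 0 T)] w) {t : ℝ}
    (ht : t ≤ T) : volterraConv lam v t = volterraConv lam w t := by
  refine integral_congr_ae ?_
  filter_upwards [ae_restrict_of_ae_restrict_of_subset (Ioc_subset_Ioc_right ht) hvw] with s hs
  rw [hs]

theorem stronglyMeasurable_volterraConv {g : ℝ → X} (hg : StronglyMeasurable g) :
    StronglyMeasurable (volterraConv lam g) := by
  have hset : MeasurableSet {p : ℝ × ℝ | p.2 ∈ Ioc 0 p.1} :=
    (measurableSet_lt measurable_const measurable_snd).inter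
      (measurableSet_le measurable_snd measurable_fst)
  have hkernel : Continuous fun p : ℝ × ℝ => lam * Real.exp (-lam * (p.1 - p.2)) := by fun_prop
  have hjoint : StronglyMeasurable (Function.uncurry fun t s =>
      (Ioc 0 t).indicator (fun s => (lam * Real.exp (-lam * (t - s))) • g s) s) :=
    (hkernel.stronglyMeasurable.smul (hg.comp_measurable measurable_snd)).indicator hset
  convert hjoint.integral_prod_right (ν := volume) using 2 with t
  exact (integral_indicator measurableSet_Ioc).symm

theorem aestronglyMeasurable_volterraConv {v : ℝ → X}
    (hv : AEStronglyMeasurable v (volume.restrict (Ioc 0 T))) :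
    AEStronglyMeasurable (volterraConv lam v) (volume.restrict (Ioc 0 T)) := by
  refine ⟨_, stronglyMeasurable_volterraConv (lam := lam) hv.stronglyMeasurable_mk, ?_⟩
  filter_upwards [ae_restrict_mem measurableSet_Ioc] with t ht
  exact volterraConv_congr_ae hv.ae_eq_mk ht.2

theorem enorm_volterraConv_le (hlam : 0 ≤ lam) (v : ℝ → X) {t : ℝ} (ht : t ≤ T) :
    ‖volterraConv lam v t‖ₑ ≤ ∫⁻ s in Ioc 0 T, volterraKernel lam t s * ‖v s‖ₑ := by
  rw [setLIntegral_volterraKernel_mul ht]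
  refine (enorm_integral_le_lintegral_enorm _).trans_eq (lintegral_congr fun s => ?_)
  rw [enorm_smul, Real.enorm_eq_ofReal (by positivity)]

theorem volterraConv_ae_eq {v w : ℝ → X} (hvw : v =ᵐ[volume.restrict (Ioc 0 T)] w) :
    volterraConv lam v =ᵐ[volume.restrict (Ioc 0 T)] volterraConv lam w := by
  filter_upwards [ae_restrict_mem measurableSet_Ioc] with t ht
  exact volterraConv_congr_ae hvw ht.2

theorem eLpNorm_volterraConv_le (hlam : 0 ≤ lam) {v : ℝ → X}
    (hv : AEStronglyMeasurable v (volume.restrict (Ioc 0 T))) :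
    eLpNorm (volterraConv lam v) 2 (volume.restrict (Ioc 0 T)) ≤
      ENNReal.ofReal (1 - Real.exp (-lam * T)) * eLpNorm v 2 (volume.restrict (Ioc 0 T)) := by
  rw [eLpNorm_congr_ae (volterraConv_ae_eq hv.ae_eq_mk), eLpNorm_congr_ae hv.ae_eq_mk,
    ← eLpNorm_enorm (hv.mk v)]
  refine (eLpNorm_mono_enorm_ae ?_).trans (eLpNorm_two_lintegral_kernel_mul_le
    (measurable_uncurry_volterraKernel lam) hv.stronglyMeasurable_mk.enorm ?_ ?_)
  · filter_upwards [ae_restrict_mem measurableSet_Ioc] with t ht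
    exact (enorm_volterraConv_le hlam _ ht.2).trans_eq (enorm_eq_self _).symm
  · filter_upwards [ae_restrict_mem measurableSet_Ioc] with t ht
    exact setLIntegral_volterraKernel_row_le hlam (Ioc_subset_Icc_self ht)
  · filter_upwards [ae_restrict_mem measurableSet_Ioc] with s hs
    exact setLIntegral_volterraKernel_col_le hlam hs

theorem memLp_volterraConv (hlam : 0 ≤ lam) {v : ℝ → X}
    (hv : MemLp v 2 (volume.restrict (Ioc 0 T))) :
    MemLp (volterraConv lam v) 2 (volume.restrict (Ioc 0 T)) :=
  ⟨aestronglyMeasurable_volterraConv hv.1,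
    (eLpNorm_volterraConv_le hlam hv.1).trans_lt (ENNReal.mul_lt_top ENNReal.ofReal_lt_top hv.2)⟩

theorem volterraConv_add {v w : ℝ → X} {t : ℝ} (hv : IntegrableOn v (Ioc 0 t))
    (hw : IntegrableOn w (Ioc 0 t)) :
    volterraConv lam (v + w) t = volterraConv lam v t + volterraConv lam w t := by
  have hkernel : ContinuousOn (fun s => lam * Real.exp (-lam * (t - s))) (Icc 0 t) :=
    Continuous.continuousOn (by fun_prop)
  have integrand {u : ℝ → X} (hu : IntegrableOn u (Ioc 0 t)) :=
    hu.continuousOn_smul_of_subset hkernel isCompact_Icc measurableSet_Ioc Ioc_subset_Icc_self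
  simp only [volterraConv, Pi.add_apply, smul_add]
  exact integral_add (integrand hv) (integrand hw)

theorem volterraConv_smul (c : ℝ) (v : ℝ → X) (t : ℝ) :
    volterraConv lam (c • v) t = c • volterraConv lam v t := by
  simp only [volterraConv, Pi.smul_apply, smul_comm _ c, integral_smul]

end Volterra

theorem BK_L2_bound_general
    (VB : Type*) [NormedAddCommGroup VB] [InnerProductSpace ℝ VB]
    (T lam βB : ℝ) (hlam : 0 < lam) (hβB : 0 < βB) (u₀ : VB)
    (B : VB →ₗ[ℝ] StrongDual ℝ VB) (hB : ∀ x : VB, ‖B x‖ ≤ βB * ‖x‖) :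
    (∀ v : ℝ → VB, MemLp v 2 (volume.restrict (Ioc 0 T)) →
      MemLp (fun t => B (volterraK lam u₀ v t)) 2 (volume.restrict (Ioc 0 T)) ∧
      eLpNorm (fun t => B (volterraK lam u₀ v t) - B u₀) 2 (volume.restrict (Ioc 0 T)) ≤
        ENNReal.ofReal (βB * (1 - Real.exp (-lam * T))) *
          eLpNorm v 2 (volume.restrict (Ioc 0 T))) ∧
    -- affine-linearity: `v ↦ BKv − Bu₀` is additive and homogeneous
    (∀ v w : ℝ → VB, MemLp v 2 (volume.restrict (Ioc 0 T)) →
      MemLp w 2 (volume.restrict (Ioc 0 T)) → ∀ t ∈ Icc (0 : ℝ) T,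
      B (volterraK lam u₀ (v + w) t) =
        B (volterraK lam u₀ v t) + B (volterraK lam u₀ w t) - B u₀) ∧
    (∀ (c : ℝ) (v : ℝ → VB), MemLp v 2 (volume.restrict (Ioc 0 T)) → ∀ t ∈ Icc (0 : ℝ) T,
      B (volterraK lam u₀ (c • v) t) =
        c • (B (volterraK lam u₀ v t) - B u₀) + B u₀) := by
  set μT := volume.restrict (Ioc (0 : ℝ) T)
  set Bc : VB →L[ℝ] StrongDual ℝ VB := B.mkContinuous βB hB
  have hBK (v : ℝ → VB) (t : ℝ) :
      B (volterraK lam u₀ v t) = B u₀ + Bc (volterraConv lam v t) := by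
    rw [volterraK_eq_add, map_add, LinearMap.mkContinuous_apply]
  refine ⟨fun v hv => ⟨?_, ?_⟩, fun v w hv hw t ht => ?_, fun c v _ t _ => ?_⟩
  · rw [funext (hBK v)]
    have hconst : MemLp (fun _ : ℝ => B u₀) 2 μT := memLp_const _
    have hconv : MemLp (fun t => Bc (volterraConv lam v t)) 2 μT :=
      (memLp_volterraConv hlam.le hv).continuousLinearMap_comp Bc
    exact MemLp.add (ε := StrongDual ℝ VB) hconst hconv
  · have hBK_sub :
        (fun t => B (volterraK lam u₀ v t) - B u₀) = fun t => Bc (volterraConv lam v t) :=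
      funext fun t => by rw [hBK, add_sub_cancel_left]
    rw [hBK_sub]
    calc eLpNorm (fun t => Bc (volterraConv lam v t)) 2 μT
        ≤ ENNReal.ofReal βB * eLpNorm (volterraConv lam v) 2 μT :=
          eLpNorm_le_mul_eLpNorm_of_ae_le_mul (ae_of_all _ fun t => hB _) 2
      _ ≤ ENNReal.ofReal βB * (ENNReal.ofReal (1 - Real.exp (-lam * T)) * eLpNorm v 2 μT) := by
          gcongr; exact eLpNorm_volterraConv_le hlam.le hv.1
      _ = _ := by rw [ENNReal.ofReal_mul hβB.le, mul_assoc]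
  · have integrableOn (u : ℝ → VB) (hu : MemLp u 2 μT) : IntegrableOn u (Ioc 0 t) :=
      IntegrableOn.mono_set (hu.integrable one_le_two) (Ioc_subset_Ioc_right ht.2)
    rw [hBK, hBK, hBK, volterraConv_add (integrableOn v hv) (integrableOn w hw), map_add]
    abel
  · rw [hBK, hBK, volterraConv_smul, map_smul, add_sub_cancel_left, add_comm]

/-- If `B : V_B → V_B^*` is linear and bounded with constant `β_B`, then the composed
operator `BK` maps `L²(0,T;V_B)` into `L²(0,T;V_B^*)`, is affine-linear and bounded, and
satisfies `‖BKv − Bu₀‖_{L²(0,T;V_B^*)} ≤ β_B (1 − e^{−λT}) ‖v‖_{L²(0,T;V_B)}`. -/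
theorem BK_L2_bound
    (VB : Type*) [NormedAddCommGroup VB] [InnerProductSpace ℝ VB] [CompleteSpace VB]
    (T lam βB : ℝ) (hT : 0 < T) (hlam : 0 < lam) (hβB : 0 < βB) (u₀ : VB)
    (B : VB →ₗ[ℝ] StrongDual ℝ VB) (hB : ∀ x : VB, ‖B x‖ ≤ βB * ‖x‖) :
    (∀ v : ℝ → VB, MemLp v 2 (volume.restrict (Ioc 0 T)) →
      MemLp (fun t => B (volterraK lam u₀ v t)) 2 (volume.restrict (Ioc 0 T)) ∧
      eLpNorm (fun t => B (volterraK lam u₀ v t) - B u₀) 2 (volume.restrict (Ioc 0 T)) ≤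
        ENNReal.ofReal (βB * (1 - Real.exp (-lam * T))) *
          eLpNorm v 2 (volume.restrict (Ioc 0 T))) ∧
    -- affine-linearity: `v ↦ BKv − Bu₀` is additive and homogeneous
    (∀ v w : ℝ → VB, MemLp v 2 (volume.restrict (Ioc 0 T)) →
      MemLp w 2 (volume.restrict (Ioc 0 T)) → ∀ t ∈ Icc (0 : ℝ) T,
      B (volterraK lam u₀ (v + w) t) =
        B (volterraK lam u₀ v t) + B (volterraK lam u₀ w t) - B u₀) ∧
    (∀ (c : ℝ) (v : ℝ → VB), MemLp v 2 (volume.restrict (Ioc 0 T)) → ∀ t ∈ Icc (0 : ℝ) T,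
      B (volterraK lam u₀ (c • v) t) =
        c • (B (volterraK lam u₀ v t) - B u₀) + B u₀) :=
  BK_L2_bound_general VB T lam βB hlam hβB u₀ B hB
end

section
/- Let V be a real reflexive separable Banach space whose dual V^* is separable, and let A : V → V^* be monotone (⟨Au − Av, u − v⟩ ≥ 0 for all u, v ∈ V) and hemicontinuous (for all u, v, w ∈ V the map θ ↦ ⟨A(u + θv), w⟩ is continuous on [0,1]). Then for every Bochner measurable function v : [0,T] → V, the function t ↦ A(v(t)) is a Bochner measurable function from [0,T] into V^*. -/
/-!
A monotone operator is locally bounded: Banach–Steinhaus applied to the rescaled family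
`A x / (1 + ‖A x‖ ‖x - u‖)`, which monotonicity bounds pointwise, gives a bound on `‖A x‖`
near `u`. Monotonicity tested against `u + θ w`, together with hemicontinuity as `θ → 0⁺`, then
makes `u ↦ ⟨A u, w⟩` upper semicontinuous for every `w`, hence continuous (replace `w` by `-w`).
So `t ↦ ⟨A (v t), e n⟩` is measurable for a dense sequence `e`. Evaluation along `e` is a
continuous injection of the Polish space `V^*` into `ℝ^ℕ`, hence a measurable embedding
(Lusin–Souslin), and `t ↦ A (v t)` is measurable.
-/

open MeasureTheory Real Set NormedSpace

open Filter Topology Function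

section MonotoneOperator

variable {V : Type*} [NormedAddCommGroup V] [NormedSpace ℝ V] {A : V → StrongDual ℝ V}

theorem apply_le_of_monotone (hA : ∀ u v : V, 0 ≤ (A u - A v) (u - v)) (u x d : V) :
    A x d ≤ A (u + d) d + (A x (x - u) - A (u + d) (x - u)) := by
  have h := hA x (u + d)
  rw [show x - (u + d) = (x - u) - d by abel] at h
  simp only [sub_apply, map_sub] at h ⊢
  linarith

theorem apply_le_mul_of_monotone (hA : ∀ u v : V, 0 ≤ (A u - A v) (u - v)) {u x : V}
    (hx : ‖x - u‖ ≤ 1) (z : V) :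
    A x z ≤ (1 + ‖A x‖ * ‖x - u‖) * (1 + ‖A (u + z)‖ * (‖z‖ + 1)) := by
  have hle := apply_le_of_monotone hA u x z
  have h₁ : A x (x - u) ≤ ‖A x‖ * ‖x - u‖ := (le_abs_self _).trans ((A x).le_opNorm _)
  have h₂ : A (u + z) z - A (u + z) (x - u) ≤ ‖A (u + z)‖ * (‖z‖ + 1) := by
    rw [← map_sub]
    refine (le_abs_self _).trans (((A (u + z)).le_opNorm _).trans ?_)
    gcongr
    exact (norm_sub_le _ _).trans (by gcongr)
  have : 0 ≤ ‖A x‖ * ‖x - u‖ * (‖A (u + z)‖ * (‖z‖ + 1)) := by positivity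
  nlinarith

theorem exists_norm_le_mul_of_monotone [CompleteSpace V]
    (hA : ∀ u v : V, 0 ≤ (A u - A v) (u - v)) (u : V) :
    ∃ C, ∀ x, ‖x - u‖ ≤ 1 → ‖A x‖ ≤ C * (1 + ‖A x‖ * ‖x - u‖) := by
  set α : V → ℝ := fun x => 1 + ‖A x‖ * ‖x - u‖
  have hα : ∀ x, 0 < α x := fun x => by positivity
  let g : Metric.closedBall u 1 → StrongDual ℝ V := fun x => (α x)⁻¹ • A x
  let c : V → ℝ := fun z => 1 + ‖A (u + z)‖ * (‖z‖ + 1)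
  have hbound : ∀ z (x : Metric.closedBall u 1), g x z ≤ c z := fun z x => by
    simpa [g, inv_mul_le_iff₀ (hα x)] using
      apply_le_mul_of_monotone hA (mem_closedBall_iff_norm.1 x.2) z
  obtain ⟨C, hC⟩ := banach_steinhaus (g := g) fun z => ⟨max (c z) (c (-z)), fun x => by
    have h := hbound (-z) x
    rw [map_neg] at h
    exact abs_le.2 ⟨by linarith [le_max_right (c z) (c (-z))],
      (hbound z x).trans (le_max_left _ _)⟩⟩
  refine ⟨C, fun x hx => ?_⟩
  have h := hC ⟨x, mem_closedBall_iff_norm.2 hx⟩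
  rwa [norm_smul, norm_inv, Real.norm_of_nonneg (hα x).le, inv_mul_le_iff₀ (hα x),
    mul_comm] at h

theorem exists_eventually_norm_le_of_monotone [CompleteSpace V]
    (hA : ∀ u v : V, 0 ≤ (A u - A v) (u - v)) (u : V) :
    ∃ M, ∀ᶠ x in 𝓝 u, ‖A x‖ ≤ M := by
  obtain ⟨C, hC⟩ := exists_norm_le_mul_of_monotone hA u
  have hC0 : 0 ≤ C := by simpa using (norm_nonneg _).trans (hC u (by simp))
  have hsmall : ∀ᶠ x in 𝓝 u, (C + 1) * ‖x - u‖ < 1 / 2 := by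
    refine (Tendsto.eventually ?_ (gt_mem_nhds one_half_pos))
    simpa using ((continuous_sub_right u).norm.const_mul (C + 1)).tendsto u
  refine ⟨2 * C, hsmall.mono fun x hx => ?_⟩
  have hx1 : ‖x - u‖ ≤ 1 := by nlinarith [norm_nonneg (x - u)]
  have := hC x hx1
  nlinarith [norm_nonneg (A x), norm_nonneg (x - u)]

theorem tendsto_apply_sub_nhds_zero_of_eventually_norm_le {F : V → StrongDual ℝ V} {u : V}
    {M : ℝ} (hF : ∀ᶠ x in 𝓝 u, ‖F x‖ ≤ M) : Tendsto (fun x => F x (x - u)) (𝓝 u) (𝓝 0) := by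
  have hlim : Tendsto (fun x => M * ‖x - u‖) (𝓝 u) (𝓝 0) := by
    simpa using ((continuous_sub_right u).norm.const_mul M).tendsto u
  refine squeeze_zero_norm' (hF.mono fun x hx => ?_) hlim
  exact ((F x).le_opNorm _).trans (by gcongr)

theorem eventually_apply_lt_of_monotone [CompleteSpace V]
    (hA : ∀ u v : V, 0 ≤ (A u - A v) (u - v)) {u w : V}
    (hhemi : ContinuousWithinAt (fun θ : ℝ => A (u + θ • w) w) (Ici 0) 0) {b : ℝ}
    (hb : A u w < b) : ∀ᶠ x in 𝓝 u, A x w < b := by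
  obtain ⟨c, hc, hcb⟩ := exists_between hb
  obtain ⟨θ, hθc, hθ⟩ : ∃ θ : ℝ, A (u + θ • w) w < c ∧ 0 < θ := by
    have : Tendsto (fun θ : ℝ => A (u + θ • w) w) (𝓝[>] 0) (𝓝 (A u w)) := by
      simpa using (hhemi.mono Ioi_subset_Ici_self).tendsto
    exact ((this.eventually (gt_mem_nhds hc)).and self_mem_nhdsWithin).exists
  set y := u + θ • w
  obtain ⟨M, hM⟩ := exists_eventually_norm_le_of_monotone hA u
  have herr : Tendsto (fun x => A x (x - u) - A y (x - u)) (𝓝 u) (𝓝 0) := by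
    simpa using (tendsto_apply_sub_nhds_zero_of_eventually_norm_le hM).sub
      (((A y).continuous.comp (continuous_sub_right u)).tendsto' u 0 (by simp))
  filter_upwards [herr.eventually (gt_mem_nhds (mul_pos hθ (sub_pos.2 hcb)))] with x hx
  have key := apply_le_of_monotone hA u x (θ • w)
  simp only [map_smul, smul_eq_mul] at key
  have : θ * A y w < θ * c := mul_lt_mul_of_pos_left hθc hθ
  exact lt_of_mul_lt_mul_left (by linarith) hθ.le

theorem continuous_apply_of_monotone [CompleteSpace V]
    (hA : ∀ u v : V, 0 ≤ (A u - A v) (u - v))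
    (hhemi : ∀ u w : V, ContinuousWithinAt (fun θ : ℝ => A (u + θ • w) w) (Ici 0) 0) (w : V) :
    Continuous fun u => A u w := by
  refine continuous_iff_continuousAt.2 fun u => tendsto_order.2
    ⟨fun b hb => ?_, fun b hb => eventually_apply_lt_of_monotone hA (hhemi u w) hb⟩
  have hneg := eventually_apply_lt_of_monotone hA (hhemi u (-w)) (b := -b) (by simpa using hb)
  exact hneg.mono fun x hx => by simpa using hx

end MonotoneOperator

theorem StrongDual.injective_eval_of_denseRange {𝕜 V ι : Type*} [NontriviallyNormedField 𝕜]
    [NormedAddCommGroup V] [NormedSpace 𝕜 V] {e : ι → V} (he : DenseRange e) :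
    Injective fun (φ : StrongDual 𝕜 V) i => φ (e i) := fun _ _ h =>
  ContinuousLinearMap.ext_on (he.mono Submodule.subset_span) fun _ ⟨i, hi⟩ =>
    hi ▸ congrFun h i

theorem measurable_of_forall_measurable_comp_of_injective {α X ι : Type*} [MeasurableSpace α]
    [TopologicalSpace X] [PolishSpace X] [MeasurableSpace X] [BorelSpace X] [Countable ι]
    {g : ι → X → ℝ} (hg : ∀ i, Continuous (g i)) (hinj : Injective fun x i => g i x)
    {f : α → X} (hf : ∀ i, Measurable fun a => g i (f a)) : Measurable f :=
  ((continuous_pi hg).measurableEmbedding hinj).measurable_comp_iff.1 (measurable_pi_iff.2 hf)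

theorem stronglyMeasurable_comp_monotone_hemicontinuous_general
    (V : Type*) [NormedAddCommGroup V] [NormedSpace ℝ V] [CompleteSpace V]
    [TopologicalSpace.SeparableSpace V] [TopologicalSpace.SeparableSpace (StrongDual ℝ V)]
    (A : V → StrongDual ℝ V)
    (hAmono : ∀ u v : V, 0 ≤ (A u - A v) (u - v))
    (hAhemi : ∀ u v w : V, ContinuousOn (fun θ : ℝ => A (u + θ • v) w) (Icc 0 1))
    (v : ℝ → V) (hv : MeasureTheory.StronglyMeasurable v) :
    MeasureTheory.StronglyMeasurable (fun t : ℝ => A (v t)) := by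
  borelize (StrongDual ℝ V)
  have hcont : ∀ w, Continuous fun u => A u w :=
    continuous_apply_of_monotone hAmono fun u w =>
      ((hAhemi u w w).continuousWithinAt (left_mem_Icc.2 zero_le_one)).mono_of_mem_nhdsWithin
        (Icc_mem_nhdsGE one_pos)
  refine (measurable_of_forall_measurable_comp_of_injective (fun _ => continuous_eval_const _)
    (StrongDual.injective_eval_of_denseRange (TopologicalSpace.denseRange_denseSeq V)) fun _ =>
      ((hcont _).comp_stronglyMeasurable hv).measurable).stronglyMeasurable

/-- Let `V` be a real reflexive separable Banach space with separable dual, and let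
`A : V → V^*` be monotone and hemicontinuous. Then `A` maps Bochner measurable functions
`v : [0,T] → V` into Bochner measurable functions `t ↦ A(v(t))` with values in `V^*`. -/
theorem stronglyMeasurable_comp_monotone_hemicontinuous
    (V : Type*) [NormedAddCommGroup V] [NormedSpace ℝ V] [CompleteSpace V]
    [TopologicalSpace.SeparableSpace V] [TopologicalSpace.SeparableSpace (StrongDual ℝ V)]
    (hrefl : Function.Surjective (NormedSpace.inclusionInDoubleDual ℝ V))
    (A : V → StrongDual ℝ V)
    (hAmono : ∀ u v : V, 0 ≤ (A u - A v) (u - v))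
    (hAhemi : ∀ u v w : V, ContinuousOn (fun θ : ℝ => A (u + θ • v) w) (Icc 0 1))
    (T : ℝ) (hT : 0 < T)
    (v : ℝ → V) (hv : MeasureTheory.StronglyMeasurable v) :
    MeasureTheory.StronglyMeasurable (fun t : ℝ => A (v t)) :=
  stronglyMeasurable_comp_monotone_hemicontinuous_general V A hAmono hAhemi v hv
end
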